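/- arXiv:2601.19009 — 3 statements merged into one kernel-verified Lean document; each statement's English description precedes it below -/
import Mathlib

section
/- Synthesis identity: for any windows g, γ ∈ C^N, any f ∈ C^N, and any vertex i, Σ_{n=1}^N Σ_{k=0}^{N-1} ⟨f, g_{n,k}⟩ γ_{n,k}(i) = N f(i) ⟨T_i γ, T_i g⟩, where g_{n,k} = M_k T_n g and γ_{n,k} = M_k T_n γ. -/
open Finset

noncomputable def gft {N : ℕ} (χ : Fin N → Fin N → ℂ) (f : Fin N → ℂ) (ℓ : Fin N) : ℂ :=
  ∑ i, f i * starRingEnd ℂ (χ ℓ i)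

noncomputable def gtrans {N : ℕ} (χ : Fin N → Fin N → ℂ) (n : Fin N) (f : Fin N → ℂ)
    (i : Fin N) : ℂ :=
  ((Real.sqrt N : ℝ) : ℂ) * ∑ ℓ, gft χ f ℓ * starRingEnd ℂ (χ ℓ n) * χ ℓ i

noncomputable def ip {N : ℕ} (f g : Fin N → ℂ) : ℂ :=
  ∑ i, f i * starRingEnd ℂ (g i)

noncomputable def nrm {N : ℕ} (f : Fin N → ℂ) : ℝ :=
  Real.sqrt (∑ i, ‖f i‖ ^ 2)

def IsONB {N : ℕ} (χ : Fin N → Fin N → ℂ) : Prop :=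
  ∀ ℓ ℓ' : Fin N, (∑ i, χ ℓ i * starRingEnd ℂ (χ ℓ' i)) = if ℓ = ℓ' then 1 else 0

noncomputable def atom {N : ℕ} (χ : Fin N → Fin N → ℂ) (g : Fin N → ℂ) (n k i : Fin N) : ℂ :=
  (N : ℂ) * χ k i * ∑ ℓ, gft χ g ℓ * starRingEnd ℂ (χ ℓ n) * χ ℓ i

/-!
Since `N = √N · √N`, the atom `g_{n,k}` is `√N · χ_k · T_n g`, so `⟨f, g_{n,k}⟩` is `√N` times the
`k`-th transform coefficient of `f · conj (T_n g)`. Summing against `χ_k(i)` over `k` inverts the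
transform (the columns of `χ` are orthonormal too), which leaves `N f(i) Σ_n T_n γ(i) conj (T_n g(i))`.
Parseval, once in the variable `n` and once in the vertex variable, shows that this sum and
`⟨T_i γ, T_i g⟩` both equal `N Σ_ℓ γ̂(ℓ) conj (ĝ(ℓ)) |χ_ℓ(i)|²`.
-/

open ComplexConjugate
open scoped Matrix

lemma sqrt_natCast_mul_self (N : ℕ) : ((Real.sqrt N : ℝ) : ℂ) * ((Real.sqrt N : ℝ) : ℂ) = N := by
  rw [← Complex.ofReal_mul, Real.mul_self_sqrt N.cast_nonneg, Complex.ofReal_natCast]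

lemma atom_eq_sqrt_mul_gtrans {N : ℕ} (χ : Fin N → Fin N → ℂ) (g : Fin N → ℂ) (n k i : Fin N) :
    atom χ g n k i = ((Real.sqrt N : ℝ) : ℂ) * χ k i * gtrans χ n g i := by
  rw [atom, gtrans, ← sqrt_natCast_mul_self]
  ring

namespace IsONB

variable {N : ℕ} {χ : Fin N → Fin N → ℂ}

lemma mul_conjTranspose_eq_one (hχ : IsONB χ) : Matrix.of χ * (Matrix.of χ)ᴴ = 1 := by
  ext ℓ ℓ'
  simpa [Matrix.mul_apply, Matrix.one_apply] using hχ ℓ ℓ'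

-- A square matrix with orthonormal rows is unitary, so its columns are orthonormal as well.
lemma sum_conj_mul_eq_ite (hχ : IsONB χ) (j i : Fin N) :
    ∑ k, conj (χ k j) * χ k i = if j = i then 1 else 0 := by
  have h : ((Matrix.of χ)ᴴ * Matrix.of χ) j i = (1 : Matrix (Fin N) (Fin N) ℂ) j i := by
    rw [mul_eq_one_comm.mp hχ.mul_conjTranspose_eq_one]
  simpa [Matrix.mul_apply, Matrix.one_apply] using h

lemma sum_gft_mul (hχ : IsONB χ) (p : Fin N → ℂ) (i : Fin N) :
    ∑ k, gft χ p k * χ k i = p i := by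
  simp_rw [gft, sum_mul, mul_assoc]
  rw [sum_comm]
  simp_rw [← mul_sum, hχ.sum_conj_mul_eq_ite]
  simp

lemma sum_mul_sum_conj (hχ : IsONB χ) (a b : Fin N → ℂ) :
    ∑ n, (∑ ℓ, a ℓ * χ ℓ n) * ∑ m, b m * conj (χ m n) = ∑ ℓ, a ℓ * b ℓ := by
  simp_rw [sum_mul_sum]
  rw [sum_comm]
  calc ∑ ℓ, ∑ n, ∑ m, a ℓ * χ ℓ n * (b m * conj (χ m n))
      = ∑ ℓ, ∑ m, a ℓ * b m * ∑ n, χ ℓ n * conj (χ m n) := by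
        refine sum_congr rfl fun ℓ _ => ?_
        rw [sum_comm]
        simp_rw [mul_sum]
        exact sum_congr rfl fun m _ => sum_congr rfl fun n _ => by ring
    _ = ∑ ℓ, a ℓ * b ℓ := by simp [hχ _ _]

end IsONB

section

variable {N : ℕ} {χ : Fin N → Fin N → ℂ}

lemma ip_gtrans (hχ : IsONB χ) (g γ : Fin N → ℂ) (i : Fin N) :
    ip (gtrans χ i γ) (gtrans χ i g) =
      N * ∑ ℓ, gft χ γ ℓ * conj (gft χ g ℓ) * (χ ℓ i * conj (χ ℓ i)) := by
  calc ip (gtrans χ i γ) (gtrans χ i g)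
      = N * ∑ n, (∑ ℓ, gft χ γ ℓ * conj (χ ℓ i) * χ ℓ n) *
          ∑ m, conj (gft χ g m) * χ m i * conj (χ m n) := by
        simp only [ip, gtrans, map_mul, map_sum, Complex.conj_ofReal, Complex.conj_conj]
        rw [mul_sum, ← sqrt_natCast_mul_self]
        exact sum_congr rfl fun _ _ => by ring
    _ = _ := by
        rw [hχ.sum_mul_sum_conj]
        exact congrArg _ (sum_congr rfl fun _ _ => by ring)

lemma sum_gtrans_mul_conj (hχ : IsONB χ) (g γ : Fin N → ℂ) (i : Fin N) :
    ∑ n, gtrans χ n γ i * conj (gtrans χ n g i) =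
      N * ∑ ℓ, gft χ γ ℓ * conj (gft χ g ℓ) * (χ ℓ i * conj (χ ℓ i)) := by
  calc ∑ n, gtrans χ n γ i * conj (gtrans χ n g i)
      = N * ∑ n, (∑ ℓ, conj (gft χ g ℓ) * conj (χ ℓ i) * χ ℓ n) *
          ∑ m, gft χ γ m * χ m i * conj (χ m n) := by
        simp only [gtrans, map_mul, map_sum, Complex.conj_ofReal, Complex.conj_conj]
        rw [mul_sum, ← sqrt_natCast_mul_self]
        refine sum_congr rfl fun n _ => ?_
        rw [sum_congr rfl fun ℓ _ => mul_right_comm (gft χ γ ℓ) (conj (χ ℓ n)) (χ ℓ i),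
          sum_congr rfl fun ℓ _ => mul_right_comm (conj (gft χ g ℓ)) (χ ℓ n) (conj (χ ℓ i))]
        ring
    _ = _ := by
        rw [hχ.sum_mul_sum_conj]
        exact congrArg _ (sum_congr rfl fun _ _ => by ring)

lemma ip_atom (f g : Fin N → ℂ) (n k : Fin N) :
    ip f (atom χ g n k) =
      ((Real.sqrt N : ℝ) : ℂ) * gft χ (fun j => f j * conj (gtrans χ n g j)) k := by
  simp only [ip, gft, atom_eq_sqrt_mul_gtrans, map_mul, Complex.conj_ofReal, mul_sum]
  exact sum_congr rfl fun _ _ => by ring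

lemma sum_ip_atom_mul_atom (hχ : IsONB χ) (f g γ : Fin N → ℂ) (n i : Fin N) :
    ∑ k, ip f (atom χ g n k) * atom χ γ n k i =
      N * f i * (gtrans χ n γ i * conj (gtrans χ n g i)) := by
  calc ∑ k, ip f (atom χ g n k) * atom χ γ n k i
      = N * gtrans χ n γ i * ∑ k, gft χ (fun j => f j * conj (gtrans χ n g j)) k * χ k i := by
        simp only [ip_atom, atom_eq_sqrt_mul_gtrans, mul_sum, ← sqrt_natCast_mul_self]
        exact sum_congr rfl fun _ _ => by ring
    _ = _ := by
        rw [hχ.sum_gft_mul]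
        ring

end

theorem stmt9 {N : ℕ} (χ : Fin N → Fin N → ℂ) (hχ : IsONB χ)
    (g γ : Fin N → ℂ) (f : Fin N → ℂ) (i : Fin N) :
    ∑ n, ∑ k, ip f (atom χ g n k) * atom χ γ n k i =
      (N : ℂ) * f i * ip (gtrans χ i γ) (gtrans χ i g) := by
  simp_rw [sum_ip_atom_mul_atom hχ, ← mul_sum, sum_gtrans_mul_conj hχ, ip_gtrans hχ]
end

section
/- Parseval-type identity for windowed graph Fourier atoms: for any window g ∈ C^N and any f ∈ C^N, Σ_{n=1}^N Σ_{k=0}^{N-1} |⟨f, g_{n,k}⟩|^2 = N Σ_{i=1}^N |f(i)|^2 ‖T_i g‖_2^2, where g_{n,k} = M_k T_n g. -/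
open Finset

/-!
Write `(T_n g)(i) = √N · A n i` with `A n i = Σ_ℓ ĝ(ℓ) χ_ℓ(n)^* χ_ℓ(i)`. The matrix `(χ_ℓ(i))` is
unitary, so Parseval in `k` turns `Σ_k |⟨f, g_{n,k}⟩|²` into `N² Σ_i |f(i)|² |A n i|²`. After
summing over `n` it remains to see `Σ_n |A n i|² = Σ_j |A i j|² = ‖T_i g‖² / N`: both columns and
rows of `A` are images of the vector `(ĝ(ℓ) χ_ℓ(i))_ℓ` (up to conjugating `χ_ℓ(i)`) under unitary
matrices, so both sums equal `Σ_ℓ |ĝ(ℓ)|² |χ_ℓ(i)|²`.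
-/

open Matrix WithLp

theorem Matrix.sum_norm_sq_mulVec_of_mem_unitaryGroup {𝕜 n : Type*} [RCLike 𝕜] [Fintype n]
    [DecidableEq n] {U : Matrix n n 𝕜} (hU : U ∈ unitaryGroup n 𝕜) (v : n → 𝕜) :
    ∑ i, ‖(U *ᵥ v) i‖ ^ 2 = ∑ i, ‖v i‖ ^ 2 := by
  have hunit := Unitary.map_mem (toEuclideanCLM (n := n) (𝕜 := 𝕜)) hU
  have hnorm := ContinuousLinearMap.norm_map_of_mem_unitary hunit (toLp 2 v)
  rw [toEuclideanCLM_toLp, EuclideanSpace.norm_eq, EuclideanSpace.norm_eq] at hnorm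
  exact (Real.sqrt_inj (by positivity) (by positivity)).mp hnorm

theorem IsONB.mem_unitaryGroup {N : ℕ} {χ : Fin N → Fin N → ℂ} (hχ : IsONB χ) :
    Matrix.of χ ∈ unitaryGroup (Fin N) ℂ := by
  rw [mem_unitaryGroup_iff]
  ext ℓ ℓ'
  simpa [Matrix.mul_apply, Matrix.one_apply] using hχ ℓ ℓ'

theorem nrm_sq {N : ℕ} (f : Fin N → ℂ) : nrm f ^ 2 = ∑ i, ‖f i‖ ^ 2 :=
  Real.sq_sqrt (by positivity)

noncomputable def gtransUnscaled {N : ℕ} (χ : Fin N → Fin N → ℂ) (g : Fin N → ℂ)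
    (n i : Fin N) : ℂ :=
  ∑ ℓ, gft χ g ℓ * starRingEnd ℂ (χ ℓ n) * χ ℓ i

theorem gtrans_eq {N : ℕ} (χ : Fin N → Fin N → ℂ) (g : Fin N → ℂ) (n i : Fin N) :
    gtrans χ n g i = ((Real.sqrt N : ℝ) : ℂ) * gtransUnscaled χ g n i := rfl

theorem atom_eq {N : ℕ} (χ : Fin N → Fin N → ℂ) (g : Fin N → ℂ) (n k i : Fin N) :
    atom χ g n k i = (N : ℂ) * χ k i * gtransUnscaled χ g n i := rfl

theorem nrm_gtrans_sq {N : ℕ} (χ : Fin N → Fin N → ℂ) (g : Fin N → ℂ) (n : Fin N) :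
    nrm (gtrans χ n g) ^ 2 = N * ∑ i, ‖gtransUnscaled χ g n i‖ ^ 2 := by
  simp only [nrm_sq, gtrans_eq, norm_mul, mul_pow, Complex.norm_real, Real.norm_eq_abs, sq_abs,
    Real.sq_sqrt (Nat.cast_nonneg N), Finset.mul_sum]

section

variable {N : ℕ} {χ : Fin N → Fin N → ℂ}

theorem sum_norm_sq_ip_atom (hχ : IsONB χ) (g f : Fin N → ℂ) (n : Fin N) :
    ∑ k, ‖ip f (atom χ g n k)‖ ^ 2 =
      (N : ℝ) ^ 2 * ∑ i, ‖f i‖ ^ 2 * ‖gtransUnscaled χ g n i‖ ^ 2 := by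
  have hU := (map_star_mem_unitaryGroup_iff).mpr hχ.mem_unitaryGroup
  have hip : ∀ k, ip f (atom χ g n k) = (N : ℂ) *
      ((Matrix.of χ).map star *ᵥ fun i => f i * starRingEnd ℂ (gtransUnscaled χ g n i)) k := by
    intro k
    simp only [ip, atom_eq, mulVec, dotProduct, map_apply, of_apply, Finset.mul_sum, map_mul,
      map_natCast]
    refine Finset.sum_congr rfl fun i _ => ?_
    simp only [RCLike.star_def]
    ring
  simp_rw [hip, norm_mul, Complex.norm_natCast, mul_pow, ← Finset.mul_sum,
    sum_norm_sq_mulVec_of_mem_unitaryGroup hU, norm_mul, Complex.norm_conj, mul_pow]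

theorem sum_norm_sq_gtransUnscaled_left (hχ : IsONB χ) (g : Fin N → ℂ) (i : Fin N) :
    ∑ n, ‖gtransUnscaled χ g n i‖ ^ 2 = ∑ ℓ, ‖gft χ g ℓ‖ ^ 2 * ‖χ ℓ i‖ ^ 2 := by
  have hU := Unitary.star_mem hχ.mem_unitaryGroup
  have h : ∀ n, gtransUnscaled χ g n i =
      ((Matrix.of χ)ᴴ *ᵥ fun ℓ => gft χ g ℓ * χ ℓ i) n := by
    intro n
    simp only [gtransUnscaled, mulVec, dotProduct, conjTranspose_apply, of_apply, RCLike.star_def]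
    refine Finset.sum_congr rfl fun ℓ _ => ?_
    ring
  simp_rw [h]
  rw [← star_eq_conjTranspose, sum_norm_sq_mulVec_of_mem_unitaryGroup hU]
  simp only [norm_mul, mul_pow]

theorem sum_norm_sq_gtransUnscaled_right (hχ : IsONB χ) (g : Fin N → ℂ) (i : Fin N) :
    ∑ j, ‖gtransUnscaled χ g i j‖ ^ 2 = ∑ ℓ, ‖gft χ g ℓ‖ ^ 2 * ‖χ ℓ i‖ ^ 2 := by
  have hU := (transpose_mem_unitaryGroup_iff).mpr hχ.mem_unitaryGroup
  have h : ∀ j, gtransUnscaled χ g i j =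
      ((Matrix.of χ)ᵀ *ᵥ fun ℓ => gft χ g ℓ * starRingEnd ℂ (χ ℓ i)) j := by
    intro j
    simp only [gtransUnscaled, mulVec, dotProduct, transpose_apply, of_apply]
    refine Finset.sum_congr rfl fun ℓ _ => ?_
    ring
  simp_rw [h, sum_norm_sq_mulVec_of_mem_unitaryGroup hU, norm_mul, Complex.norm_conj, mul_pow]

end

theorem stmt12 {N : ℕ} (χ : Fin N → Fin N → ℂ) (hχ : IsONB χ)
    (g f : Fin N → ℂ) :
    ∑ n, ∑ k, ‖ip f (atom χ g n k)‖ ^ 2 =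
      (N : ℝ) * ∑ i, ‖f i‖ ^ 2 * nrm (gtrans χ i g) ^ 2 := by
  calc ∑ n, ∑ k, ‖ip f (atom χ g n k)‖ ^ 2
      = (N : ℝ) ^ 2 * ∑ i, ‖f i‖ ^ 2 * ∑ n, ‖gtransUnscaled χ g n i‖ ^ 2 := by
        simp_rw [sum_norm_sq_ip_atom hχ, ← Finset.mul_sum]
        rw [Finset.sum_comm]
        simp only [Finset.mul_sum]
    _ = (N : ℝ) * ∑ i, ‖f i‖ ^ 2 * nrm (gtrans χ i g) ^ 2 := by
        simp_rw [nrm_gtrans_sq, sum_norm_sq_gtransUnscaled_left hχ,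
          sum_norm_sq_gtransUnscaled_right hχ, Finset.mul_sum]
        refine Finset.sum_congr rfl fun i _ => Finset.sum_congr rfl fun ℓ _ => ?_
        ring
end

section
/- Multi-window sufficient condition (spectral positivity): let g^1,...,g^J, γ^1,...,γ^J ∈ C^N with Σ_{j=1}^J Re(ĝ^j(ℓ)^* γ̂^j(ℓ)) ≥ 0 for all ℓ = 1,...,N-1 and Σ_{j=1}^J Re(ĝ^j(0)^* γ̂^j(0)) > 0. Then Σ_{j=1}^J ⟨T_i γ^j, T_i g^j⟩ ≠ 0 for every vertex i. -/
open Finset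

/-! `T_n` is diagonal in the basis `χ`: it multiplies the `ℓ`-th coefficient by
`√N · conj (χ_ℓ n)`. Parseval then gives
`Re ∑_j ⟪T_n γʲ, T_n gʲ⟫ = N ∑_ℓ |χ_ℓ n|² ∑_j Re (conj ĝʲ(ℓ) γ̂ʲ(ℓ))`, a sum of nonnegative
terms whose `ℓ = 0` term is positive because `|χ_0 n|² = 1/N`. -/

noncomputable def synth {N : ℕ} (χ : Fin N → Fin N → ℂ) (a : Fin N → ℂ) (i : Fin N) : ℂ :=
  ∑ ℓ, a ℓ * χ ℓ i

theorem ip_synth_synth {N : ℕ} {χ : Fin N → Fin N → ℂ} (hχ : IsONB χ) (a b : Fin N → ℂ) :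
    ip (synth χ a) (synth χ b) = ∑ ℓ, a ℓ * starRingEnd ℂ (b ℓ) := by
  calc ip (synth χ a) (synth χ b)
      = ∑ ℓ', ∑ ℓ, a ℓ * starRingEnd ℂ (b ℓ') * ∑ i, χ ℓ i * starRingEnd ℂ (χ ℓ' i) := by
        simp only [ip, synth, map_sum, map_mul, Finset.sum_mul, Finset.mul_sum]
        rw [Finset.sum_comm]
        refine Finset.sum_congr rfl fun ℓ' _ => ?_
        rw [Finset.sum_comm]
        exact Finset.sum_congr rfl fun ℓ _ => Finset.sum_congr rfl fun i _ => by ring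
    _ = ∑ ℓ, a ℓ * starRingEnd ℂ (b ℓ) := by
        simp only [hχ _ _, mul_ite, mul_one, mul_zero, Finset.sum_ite_eq', Finset.mem_univ, if_true]

theorem gtrans_eq_synth {N : ℕ} (χ : Fin N → Fin N → ℂ) (n : Fin N) (f : Fin N → ℂ) :
    gtrans χ n f = synth χ (fun ℓ => (Real.sqrt N : ℂ) * gft χ f ℓ * starRingEnd ℂ (χ ℓ n)) := by
  ext i
  simp only [gtrans, synth, Finset.mul_sum, mul_assoc]

theorem ip_gtrans_gtrans {N : ℕ} {χ : Fin N → Fin N → ℂ} (hχ : IsONB χ) (n : Fin N)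
    (f h : Fin N → ℂ) :
    ip (gtrans χ n f) (gtrans χ n h)
      = N * ∑ ℓ, gft χ f ℓ * starRingEnd ℂ (gft χ h ℓ) * (‖χ ℓ n‖ ^ 2 : ℝ) := by
  have hsqrt : (Real.sqrt N : ℂ) * (Real.sqrt N : ℂ) = N := by
    rw [← Complex.ofReal_mul, Real.mul_self_sqrt (Nat.cast_nonneg N), Complex.ofReal_natCast]
  have hnorm : ∀ ℓ, starRingEnd ℂ (χ ℓ n) * χ ℓ n = (‖χ ℓ n‖ ^ 2 : ℝ) := fun ℓ => by
    rw [mul_comm, Complex.mul_conj, Complex.normSq_eq_norm_sq]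
  rw [gtrans_eq_synth, gtrans_eq_synth, ip_synth_synth hχ, Finset.mul_sum]
  refine Finset.sum_congr rfl fun ℓ _ => ?_
  simp only [map_mul, Complex.conj_ofReal, Complex.conj_conj]
  rw [← hsqrt, ← hnorm ℓ]
  ring

theorem re_sum_ip_gtrans {N J : ℕ} {χ : Fin N → Fin N → ℂ} (hχ : IsONB χ) (n : Fin N)
    (g γ : Fin J → Fin N → ℂ) :
    (∑ j, ip (gtrans χ n (γ j)) (gtrans χ n (g j))).re
      = N * ∑ ℓ, (∑ j, (starRingEnd ℂ (gft χ (g j) ℓ) * gft χ (γ j) ℓ).re) * ‖χ ℓ n‖ ^ 2 := by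
  simp only [ip_gtrans_gtrans hχ, ← Finset.mul_sum]
  rw [← Complex.ofReal_natCast, Complex.re_ofReal_mul, Finset.sum_comm]
  simp only [Complex.re_sum, Complex.re_mul_ofReal, Finset.sum_mul]
  refine congrArg _ (Finset.sum_congr rfl fun ℓ _ => Finset.sum_congr rfl fun j _ => ?_)
  rw [mul_comm (gft χ (γ j) ℓ), ← Complex.conj_re, map_mul, Complex.conj_conj]

theorem stmt17 {N J : ℕ} (hN : 0 < N) (χ : Fin N → Fin N → ℂ) (hχ : IsONB χ)
    (hmod : ∀ i, ‖χ (⟨0, hN⟩ : Fin N) i‖ = 1 / Real.sqrt N)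
    (g γ : Fin J → Fin N → ℂ)
    (hpos : ∀ ℓ : Fin N, ℓ ≠ ⟨0, hN⟩ →
      0 ≤ ∑ j, (starRingEnd ℂ (gft χ (g j) ℓ) * gft χ (γ j) ℓ).re)
    (hpos0 : 0 < ∑ j, (starRingEnd ℂ (gft χ (g j) ⟨0, hN⟩) * gft χ (γ j) ⟨0, hN⟩).re) :
    ∀ i : Fin N, (∑ j, ip (gtrans χ i (γ j)) (gtrans χ i (g j))) ≠ 0 := by
  intro i hzero
  have hre := re_sum_ip_gtrans hχ i g γ
  rw [hzero, Complex.zero_re] at hre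
  have hweighted : 0 < ∑ ℓ, (∑ j, (starRingEnd ℂ (gft χ (g j) ℓ) * gft χ (γ j) ℓ).re) *
      ‖χ ℓ i‖ ^ 2 := by
    refine Finset.sum_pos' (fun ℓ _ => mul_nonneg ?_ (sq_nonneg _))
      ⟨⟨0, hN⟩, Finset.mem_univ _, mul_pos hpos0 (by rw [hmod i]; positivity)⟩
    by_cases hℓ : ℓ = ⟨0, hN⟩
    · exact hℓ ▸ hpos0.le
    · exact hpos ℓ hℓ
  exact (mul_pos (Nat.cast_pos.2 hN) hweighted).ne hre
end
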